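/- Let X be a Borel subset of ℝ^m, Y a finite set, U a finite set, T a transition kernel from X×U to X and Q an observation kernel from X to Y. Assume that for some α_X < ∞ one has ‖T(·|x,u) − T(·|x',u)‖_TV ≤ α_X |x − x'| for all x, x' ∈ X and all u ∈ U, and let δ(Q) = inf_{x,x'∈X} Σ_{y∈Y} min(Q(y|x), Q(y|x')) be the Dobrushin coefficient of Q. Then for every z, z' ∈ P(X) and every u ∈ U, the predictive observation distributions satisfy ‖P(·|z,u) − P(·|z',u)‖_TV ≤ (1 − δ(Q))(1 + α_X) ρ_BL(z, z'), where ρ_BL is the bounded-Lipschitz metric on P(X) induced by the Euclidean metric on X. -/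

import Mathlib

/-!
Fix `f : Y → ℝ` with `|f| ≤ 1` and put `g x = ∑ y, f y * Q x y`. Two values of `g` differ by at
most `∑ y, |Q x y - Q x' y| = 2 - 2 ∑ y, min (Q x y) (Q x' y) ≤ 2 (1 - δ(Q))`, so `g` stays within
`1 - δ(Q)` of some constant `c`. Averaging against `T(·|x,u)` keeps `h x = ∫ g dT(·|x,u)` within
`1 - δ(Q)` of `c`, and makes `h` `(1 - δ(Q)) α_X`-Lipschitz because `x ↦ T(·|x,u)` is
`α_X`-Lipschitz into total variation. As `∑ y, f y P(y|z,u) = ∫ h dz`, the bounded-Lipschitz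
distance bounds the difference of these sums by `(1 - δ(Q)) (1 + α_X) ρ_BL(z, z')`.
-/

open MeasureTheory

noncomputable section

/-- `‖f‖_BL ≤ c` with respect to the distance-like function `d`:
there are `a, b ≥ 0` with `a + b ≤ c` such that `f` is bounded by `a` and
`b`-Lipschitz with respect to `d`. -/
def blNormLE {S : Type*} (d : S → S → ℝ) (f : S → ℝ) (c : ℝ) : Prop :=
  ∃ a b : ℝ, 0 ≤ a ∧ 0 ≤ b ∧ a + b ≤ c ∧ (∀ x, |f x| ≤ a) ∧
    ∀ x y, |f x - f y| ≤ b * d x y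

/-- Bounded-Lipschitz distance between two measures, induced by `d`. -/
def blDist {S : Type*} [MeasurableSpace S] (d : S → S → ℝ) (μ ν : Measure S) : ℝ :=
  sSup {r | ∃ f : S → ℝ, Measurable f ∧ blNormLE d f 1 ∧
    r = |∫ x, f x ∂μ - ∫ x, f x ∂ν|}

/-- Total variation distance between two measures. -/
def tvDist {S : Type*} [MeasurableSpace S] (μ ν : Measure S) : ℝ :=
  sSup {r | ∃ f : S → ℝ, Measurable f ∧ (∀ x, |f x| ≤ 1) ∧
    r = |∫ x, f x ∂μ - ∫ x, f x ∂ν|}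

variable {X Y U : Type*} [MeasurableSpace X] [Fintype Y]

/-- One-step push-forward `zT_u` of a belief `z` through the transition kernel `T`. -/
def beliefPush (T : X → U → Measure X) (z : Measure X) (u : U) : Measure X :=
  z.bind fun x => T x u

/-- Predictive probability `P(y|z,u) = ∫ Q(y|x₁) (zT_u)(dx₁)` of observing `y`. -/
def obsProb (T : X → U → Measure X) (Q : X → Y → ℝ) (z : Measure X) (u : U) (y : Y) : ℝ :=
  ∫ x, Q x y ∂(beliefPush T z u)

/-- Bayes update `F(z,u,y)` of the belief `z` after applying `u` and observing `y`. -/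
def bayes (T : X → U → Measure X) (Q : X → Y → ℝ) (z : Measure X) (u : U) (y : Y) :
    Measure X :=
  (ENNReal.ofReal (obsProb T Q z u y))⁻¹ •
    ((beliefPush T z u).withDensity fun x => ENNReal.ofReal (Q x y))

/-- Integral of a function `f` on beliefs against the belief transition kernel
`η(·|z,u) = Σ_{y : P(y|z,u) > 0} P(y|z,u) δ_{F(z,u,y)}`. -/
def etaInt (T : X → U → Measure X) (Q : X → Y → ℝ) (f : Measure X → ℝ)
    (z : Measure X) (u : U) : ℝ :=
  ∑ y : Y, if 0 < obsProb T Q z u y then obsProb T Q z u y * f (bayes T Q z u y) else 0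

/-- Bounded-Lipschitz distance (with respect to a pseudometric `ρ` on beliefs)
between `η(·|z,u)` and `η(·|z',u)`. -/
def etaBLDist (T : X → U → Measure X) (Q : X → Y → ℝ)
    (ρ : Measure X → Measure X → ℝ) (z z' : Measure X) (u : U) : ℝ :=
  sSup {r | ∃ f : Measure X → ℝ, blNormLE ρ f 1 ∧
    r = |etaInt T Q f z u - etaInt T Q f z' u|}

/-- The pseudometric `ρ(μ,ν) = Σ_{m ≥ 1} 2^{-(m+1)} |∫ f_m dμ - ∫ f_m dν|` on beliefs
induced by the sequence of test functions `fs` (with `fs k` playing the role of `f_{k+1}`). -/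
def rhoSeq (fs : ℕ → X → ℝ) (μ ν : Measure X) : ℝ :=
  ∑' k : ℕ, (2 : ℝ)⁻¹ ^ (k + 2) * |∫ x, fs k x ∂μ - ∫ x, fs k x ∂ν|

/-- Dobrushin coefficient of an observation channel `Q` into a finite set. -/
def dobrushinObs (Q : X → Y → ℝ) : ℝ :=
  ⨅ p : X × X, ∑ y : Y, min (Q p.1 y) (Q p.2 y)

/-- Dobrushin coefficient of a Markov kernel `K`, via finite measurable partitions. -/
def dobrushinKernel (K : X → Measure X) : ℝ :=
  sInf {r | ∃ (x x' : X) (n : ℕ) (A : Fin n → Set X),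
    (∀ i, MeasurableSet (A i)) ∧ Pairwise (Function.onFun Disjoint A) ∧
    (⋃ i, A i) = Set.univ ∧
    r = ∑ i, min ((K x (A i)).toReal) ((K x' (A i)).toReal)}

/-- `δ̃(T) = inf_u δ(T(·|·,u))`. -/
def dobrushinTrans (T : X → U → Measure X) : ℝ :=
  ⨅ u : U, dobrushinKernel fun x => T x u

end

/-- Total variation distance between the predictive observation distributions
`P(·|z,u)` and `P(·|z',u)` on the finite observation set `Y`. -/
noncomputable def obsTVDist {X Y U : Type*} [MeasurableSpace X] [Fintype Y]
    (T : X → U → MeasureTheory.Measure X) (Q : X → Y → ℝ)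
    (z z' : MeasureTheory.Measure X) (u : U) : ℝ :=
  sSup {r | ∃ f : Y → ℝ, (∀ y, |f y| ≤ 1) ∧
    r = |∑ y : Y, f y * obsProb T Q z u y - ∑ y : Y, f y * obsProb T Q z' u y|}

open ProbabilityTheory

section Distances

variable {S : Type*} [MeasurableSpace S] {μ ν : Measure S}

lemma integrable_of_abs_sub_le [IsFiniteMeasure μ] {f : S → ℝ} (hf : Measurable f) {c a : ℝ}
    (hfc : ∀ x, |f x - c| ≤ a) : Integrable f μ :=
  .of_bound hf.aestronglyMeasurable (|c| + a) <| .of_forall fun x => by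
    have := abs_sub_abs_le_abs_sub (f x) c
    rw [Real.norm_eq_abs]
    linarith [hfc x]

lemma abs_integral_sub_le_of_abs_sub_le [IsProbabilityMeasure μ] {f : S → ℝ}
    (hf : Measurable f) {c a : ℝ} (hfc : ∀ x, |f x - c| ≤ a) : |∫ x, f x ∂μ - c| ≤ a := by
  have hint : ∫ x, (f x - c) ∂μ = ∫ x, f x ∂μ - c := by
    rw [integral_sub (integrable_of_abs_sub_le hf hfc) (integrable_const c), integral_const,
      probReal_univ, one_smul]
  rw [← hint, ← Real.norm_eq_abs]
  simpa using
    norm_integral_le_of_norm_le_const (μ := μ) (f := fun x => f x - c) (.of_forall hfc)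

lemma integral_sub_integral_eq_mul [IsProbabilityMeasure μ] [IsProbabilityMeasure ν]
    {f : S → ℝ} (hfμ : Integrable f μ) (hfν : Integrable f ν) (c : ℝ) {s : ℝ} (hs : s ≠ 0) :
    ∫ x, f x ∂μ - ∫ x, f x ∂ν =
      s * (∫ x, (f x - c) / s ∂μ - ∫ x, (f x - c) / s ∂ν) := by
  simp only [integral_div, integral_sub hfμ (integrable_const c),
    integral_sub hfν (integrable_const c), integral_const, probReal_univ, one_smul]
  field_simp
  ring

lemma abs_integral_sub_integral_le_two [IsProbabilityMeasure μ] [IsProbabilityMeasure ν]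
    {f : S → ℝ} (hf : Measurable f) (hf_le : ∀ x, |f x| ≤ 1) :
    |∫ x, f x ∂μ - ∫ x, f x ∂ν| ≤ 2 := by
  have hf0 : ∀ x, |f x - 0| ≤ 1 := by simpa using hf_le
  have hμ := abs_integral_sub_le_of_abs_sub_le (μ := μ) hf hf0
  have hν := abs_integral_sub_le_of_abs_sub_le (μ := ν) hf hf0
  rw [sub_zero] at hμ hν
  linarith [abs_sub (∫ x, f x ∂μ) (∫ x, f x ∂ν)]

lemma tvDist_nonneg : 0 ≤ tvDist μ ν :=
  Real.sSup_nonneg <| by rintro _ ⟨f, -, -, rfl⟩; exact abs_nonneg _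

lemma abs_integral_sub_le_tvDist [IsProbabilityMeasure μ] [IsProbabilityMeasure ν]
    {f : S → ℝ} (hf : Measurable f) (hf_le : ∀ x, |f x| ≤ 1) :
    |∫ x, f x ∂μ - ∫ x, f x ∂ν| ≤ tvDist μ ν :=
  le_csSup ⟨2, by rintro _ ⟨g, hg, hg_le, rfl⟩; exact abs_integral_sub_integral_le_two hg hg_le⟩
    ⟨f, hf, hf_le, rfl⟩

variable (d : S → S → ℝ)

lemma blDist_nonneg : 0 ≤ blDist d μ ν :=
  Real.sSup_nonneg <| by rintro _ ⟨f, -, -, rfl⟩; exact abs_nonneg _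

lemma blDist_self : blDist d μ μ = 0 :=
  (Real.sSup_le (by rintro _ ⟨f, -, -, rfl⟩; simp) le_rfl).antisymm (blDist_nonneg d)

variable {d}

lemma abs_integral_sub_le_blDist [IsProbabilityMeasure μ] [IsProbabilityMeasure ν]
    {f : S → ℝ} (hf : Measurable f) (hf_bl : blNormLE d f 1) :
    |∫ x, f x ∂μ - ∫ x, f x ∂ν| ≤ blDist d μ ν := by
  refine le_csSup ⟨2, ?_⟩ ⟨f, hf, hf_bl, rfl⟩
  rintro _ ⟨g, hg, ⟨a, b, -, hb, hab, hg_le, -⟩, rfl⟩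
  exact abs_integral_sub_integral_le_two hg fun x => (hg_le x).trans (by linarith)

end Distances

section Oscillation

variable {S : Type*} [MeasurableSpace S] {μ ν : Measure S} [IsProbabilityMeasure μ]
  [IsProbabilityMeasure ν] {f : S → ℝ} {c a : ℝ}

lemma integral_eq_of_abs_sub_le_zero (hf : Measurable f) (hfc : ∀ x, |f x - c| ≤ 0) :
    ∫ x, f x ∂μ = c :=
  sub_eq_zero.mp <| abs_nonpos_iff.mp <| abs_integral_sub_le_of_abs_sub_le hf hfc

lemma abs_integral_sub_le_mul_tvDist (hf : Measurable f) (hfc : ∀ x, |f x - c| ≤ a) :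
    |∫ x, f x ∂μ - ∫ x, f x ∂ν| ≤ a * tvDist μ ν := by
  obtain ⟨x₀⟩ := nonempty_of_isProbabilityMeasure μ
  rcases ((abs_nonneg _).trans (hfc x₀)).eq_or_lt with rfl | ha
  · simp [integral_eq_of_abs_sub_le_zero hf hfc]
  rw [integral_sub_integral_eq_mul (integrable_of_abs_sub_le hf hfc)
    (integrable_of_abs_sub_le hf hfc) c ha.ne', abs_mul, abs_of_pos ha]
  refine mul_le_mul_of_nonneg_left
    (abs_integral_sub_le_tvDist (by fun_prop) fun x => ?_) ha.le
  rw [abs_div, abs_of_pos ha]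
  exact div_le_one_of_le₀ (hfc x) ha.le

lemma abs_integral_sub_le_mul_blDist {d : S → S → ℝ} (hf : Measurable f)
    (hfc : ∀ x, |f x - c| ≤ a) {b : ℝ} (hb : 0 ≤ b) (hf_lip : ∀ x y, |f x - f y| ≤ b * d x y) :
    |∫ x, f x ∂μ - ∫ x, f x ∂ν| ≤ (a + b) * blDist d μ ν := by
  obtain ⟨x₀⟩ := nonempty_of_isProbabilityMeasure μ
  have ha : 0 ≤ a := (abs_nonneg _).trans (hfc x₀)
  rcases (add_nonneg ha hb).eq_or_lt with hab | hab
  · obtain ⟨rfl, rfl⟩ : a = 0 ∧ b = 0 := ⟨by linarith, by linarith⟩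
    simp [integral_eq_of_abs_sub_le_zero hf hfc]
  rw [integral_sub_integral_eq_mul (integrable_of_abs_sub_le hf hfc)
    (integrable_of_abs_sub_le hf hfc) c hab.ne', abs_mul, abs_of_pos hab]
  refine mul_le_mul_of_nonneg_left (abs_integral_sub_le_blDist (by fun_prop) ?_) hab.le
  refine ⟨a / (a + b), b / (a + b), by positivity, by positivity, by field_simp; rfl, ?_, ?_⟩
  · intro x
    rw [abs_div, abs_of_pos hab]
    exact div_le_div_of_nonneg_right (hfc x) hab.le
  · intro x y
    rw [← sub_div, sub_sub_sub_cancel_right, abs_div, abs_of_pos hab, div_mul_eq_mul_div]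
    exact div_le_div_of_nonneg_right (hf_lip x y) hab.le

end Oscillation

lemma MeasureTheory.Measure.integral_comp {α β : Type*} [MeasurableSpace α] [MeasurableSpace β]
    {κ : Kernel α β} {μ : Measure α} {f : β → ℝ} (hf : Integrable f (κ ∘ₘ μ)) :
    ∫ y, f y ∂(κ ∘ₘ μ) = ∫ x, ∫ y, f y ∂(κ x) ∂μ := by
  rw [Measure.comp_eq_comp_const_apply] at hf ⊢
  rw [Kernel.integral_comp hf, Kernel.const_apply]

lemma MeasureTheory.Measure.eq_of_subsingleton {S : Type*} [MeasurableSpace S] [Subsingleton S]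
    (μ ν : Measure S) [IsProbabilityMeasure μ] [IsProbabilityMeasure ν] : μ = ν := by
  ext s -
  rcases s.eq_empty_or_nonempty with rfl | hs
  · simp
  · rw [Subsingleton.eq_univ_of_nonempty hs, measure_univ, measure_univ]

lemma exists_abs_sub_le_of_forall_sub_le {ι : Type*} {g : ι → ℝ} {r : ℝ}
    (hg : ∀ i j, g i - g j ≤ 2 * r) : ∃ c, ∀ i, |g i - c| ≤ r := by
  rcases isEmpty_or_nonempty ι with hι | hι
  · exact ⟨0, fun i => hι.elim i⟩
  obtain i₀ : ι := Classical.arbitrary ι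
  have hbdd_above : BddAbove (Set.range g) :=
    ⟨g i₀ + 2 * r, by rintro _ ⟨i, rfl⟩; linarith [hg i i₀]⟩
  have hbdd_below : BddBelow (Set.range g) :=
    ⟨g i₀ - 2 * r, by rintro _ ⟨i, rfl⟩; linarith [hg i₀ i]⟩
  have hspread : ⨆ i, g i ≤ (⨅ i, g i) + 2 * r :=
    ciSup_le fun i => by
      linarith [le_ciInf fun j => (by linarith [hg i j] : g i - 2 * r ≤ g j)]
  refine ⟨((⨆ i, g i) + ⨅ i, g i) / 2, fun i => abs_le.mpr ⟨?_, ?_⟩⟩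
  · linarith [ciInf_le hbdd_below i]
  · linarith [le_ciSup hbdd_above i]

section Observation

variable {X Y : Type*} [Fintype Y] {Q : X → Y → ℝ}

lemma le_one_of_sum_eq_one (hQ_nonneg : ∀ x y, 0 ≤ Q x y) (hQ_sum : ∀ x, ∑ y, Q x y = 1)
    (x : X) (y : Y) : Q x y ≤ 1 :=
  hQ_sum x ▸ Finset.single_le_sum (fun y _ => hQ_nonneg x y) (Finset.mem_univ y)

lemma dobrushinObs_le_sum_min (hQ_nonneg : ∀ x y, 0 ≤ Q x y) (x x' : X) :
    dobrushinObs Q ≤ ∑ y, min (Q x y) (Q x' y) :=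
  ciInf_le ⟨0, by
    rintro _ ⟨p, rfl⟩
    exact Finset.sum_nonneg fun y _ => le_min (hQ_nonneg _ _) (hQ_nonneg _ _)⟩ (x, x')

lemma dobrushinObs_le_one [Nonempty X] (hQ_nonneg : ∀ x y, 0 ≤ Q x y)
    (hQ_sum : ∀ x, ∑ y, Q x y = 1) : dobrushinObs Q ≤ 1 := by
  obtain ⟨x⟩ := ‹Nonempty X›
  simpa [hQ_sum x] using dobrushinObs_le_sum_min hQ_nonneg x x

lemma sum_abs_sub_eq_two_sub_sum_min (hQ_sum : ∀ x, ∑ y, Q x y = 1) (x x' : X) :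
    ∑ y, |Q x y - Q x' y| = 2 - 2 * ∑ y, min (Q x y) (Q x' y) := by
  have habs (a b : ℝ) : |a - b| = a + b - 2 * min a b := by
    rcases le_total a b with h | h
    · rw [abs_of_nonpos (by linarith), min_eq_left h]; ring
    · rw [abs_of_nonneg (by linarith), min_eq_right h]; ring
  simp only [habs, Finset.sum_sub_distrib, Finset.sum_add_distrib, hQ_sum, ← Finset.mul_sum]
  norm_num

lemma sum_mul_sub_sum_mul_le (hQ_nonneg : ∀ x y, 0 ≤ Q x y) (hQ_sum : ∀ x, ∑ y, Q x y = 1)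
    {f : Y → ℝ} (hf : ∀ y, |f y| ≤ 1) (x x' : X) :
    ∑ y, f y * Q x y - ∑ y, f y * Q x' y ≤ 2 * (1 - dobrushinObs Q) :=
  calc ∑ y, f y * Q x y - ∑ y, f y * Q x' y = ∑ y, f y * (Q x y - Q x' y) := by
        simp only [mul_sub, Finset.sum_sub_distrib]
    _ ≤ ∑ y, |Q x y - Q x' y| := Finset.sum_le_sum fun y _ => by
        calc f y * (Q x y - Q x' y) ≤ |f y| * |Q x y - Q x' y| :=
            (le_abs_self _).trans_eq (abs_mul _ _)
          _ ≤ |Q x y - Q x' y| := mul_le_of_le_one_left (abs_nonneg _) (hf y)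
    _ ≤ 2 * (1 - dobrushinObs Q) := by
        rw [sum_abs_sub_eq_two_sub_sum_min hQ_sum]
        linarith [dobrushinObs_le_sum_min hQ_nonneg x x']

variable [MeasurableSpace X] {U : Type*} {T : X → U → Measure X} {u : U}

lemma sum_mul_obsProb_eq_integral (hT_meas : Measurable fun x => T x u)
    (hT_prob : ∀ x, IsProbabilityMeasure (T x u)) (hQ_meas : ∀ y, Measurable fun x => Q x y)
    (hQ_nonneg : ∀ x y, 0 ≤ Q x y) (hQ_sum : ∀ x, ∑ y, Q x y = 1) (f : Y → ℝ)
    (w : Measure X) [IsProbabilityMeasure w] :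
    ∑ y, f y * obsProb T Q w u y = ∫ x, ∫ x₁, ∑ y, f y * Q x₁ y ∂(T x u) ∂w := by
  let κ : Kernel X X := ⟨fun x => T x u, hT_meas⟩
  have : IsMarkovKernel κ := ⟨hT_prob⟩
  have hQ_int (y : Y) : Integrable (fun x => Q x y) (κ ∘ₘ w) :=
    integrable_of_abs_sub_le (c := 0) (a := 1) (hQ_meas y) fun x => by
      rw [sub_zero, abs_of_nonneg (hQ_nonneg x y)]
      exact le_one_of_sum_eq_one hQ_nonneg hQ_sum x y
  have hsum : ∑ y, f y * obsProb T Q w u y = ∫ x₁, ∑ y, f y * Q x₁ y ∂(κ ∘ₘ w) := by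
    rw [integral_finsetSum _ fun y _ => (hQ_int y).const_mul (f y)]
    simp only [integral_const_mul]
    rfl
  rw [hsum, Measure.integral_comp <|
    integrable_finsetSum _ fun y _ => (hQ_int y).const_mul (f y)]
  rfl

end Observation

theorem statement5_general {m : ℕ} (Xs : Set (EuclideanSpace ℝ (Fin m)))
    {Y U : Type*} [Fintype Y]
    (T : Xs → U → MeasureTheory.Measure Xs)
    (hT_meas : ∀ u : U, Measurable fun x : Xs => T x u)
    (hT_prob : ∀ (x : Xs) (u : U), MeasureTheory.IsProbabilityMeasure (T x u))
    (Q : Xs → Y → ℝ)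
    (hQ_meas : ∀ y : Y, Measurable fun x : Xs => Q x y)
    (hQ_nonneg : ∀ (x : Xs) (y : Y), 0 ≤ Q x y)
    (hQ_sum : ∀ x : Xs, ∑ y : Y, Q x y = 1)
    (αX : ℝ)
    (hT_lip : ∀ (x x' : Xs) (u : U), tvDist (T x u) (T x' u) ≤ αX * dist x x')
    (z z' : MeasureTheory.Measure Xs)
    (hz : MeasureTheory.IsProbabilityMeasure z)
    (hz' : MeasureTheory.IsProbabilityMeasure z')
    (u : U) :
    obsTVDist T Q z z' u ≤
      (1 - dobrushinObs Q) * (1 + αX) * blDist (fun x x' : Xs => dist x x') z z' := by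
  have : Nonempty Xs := nonempty_of_isProbabilityMeasure z
  set δ := dobrushinObs Q
  have hδ : δ ≤ 1 := dobrushinObs_le_one hQ_nonneg hQ_sum
  rcases lt_or_ge αX 0 with hα | hα
  · -- `hT_lip` with a negative constant forces `Xs` to be a single point, so `z = z'`
    have : Subsingleton Xs := ⟨fun x x' => by
      by_contra hne
      nlinarith [hT_lip x x' u, tvDist_nonneg (μ := T x u) (ν := T x' u), dist_pos.mpr hne]⟩
    obtain rfl := Measure.eq_of_subsingleton z z'
    rw [blDist_self, mul_zero]
    exact Real.sSup_le (by rintro _ ⟨f, -, rfl⟩; simp) le_rfl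
  refine Real.sSup_le ?_ <|
    mul_nonneg (mul_nonneg (by linarith) (by linarith)) (blDist_nonneg _)
  rintro _ ⟨f, hf, rfl⟩
  obtain ⟨c, hc⟩ :=
    exists_abs_sub_le_of_forall_sub_le (sum_mul_sub_sum_mul_le hQ_nonneg hQ_sum hf)
  have hg_meas : Measurable fun x => ∑ y, f y * Q x y := by fun_prop
  set h := fun x => ∫ x₁, ∑ y, f y * Q x₁ y ∂(T x u)
  have h_meas : Measurable h :=
    (hg_meas.stronglyMeasurable.integral_kernel (κ := ⟨fun x => T x u, hT_meas u⟩)).measurable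
  have h_center (x : Xs) : |h x - c| ≤ 1 - δ :=
    have := hT_prob x u
    abs_integral_sub_le_of_abs_sub_le hg_meas hc
  have h_lip (x x' : Xs) : |h x - h x'| ≤ (1 - δ) * αX * dist x x' := by
    have := hT_prob x u
    have := hT_prob x' u
    calc |h x - h x'| ≤ (1 - δ) * tvDist (T x u) (T x' u) :=
          abs_integral_sub_le_mul_tvDist hg_meas hc
      _ ≤ (1 - δ) * αX * dist x x' := by
        rw [mul_assoc]; exact mul_le_mul_of_nonneg_left (hT_lip x x' u) (by linarith)
  rw [sum_mul_obsProb_eq_integral (hT_meas u) (hT_prob · u) hQ_meas hQ_nonneg hQ_sum,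
    sum_mul_obsProb_eq_integral (hT_meas u) (hT_prob · u) hQ_meas hQ_nonneg hQ_sum]
  calc _ ≤ (1 - δ + (1 - δ) * αX) * blDist (fun x x' : Xs => dist x x') z z' :=
        abs_integral_sub_le_mul_blDist h_meas h_center (mul_nonneg (by linarith) hα) h_lip
    _ = _ := by ring

theorem statement5 {m : ℕ} (Xs : Set (EuclideanSpace ℝ (Fin m))) (hXs : MeasurableSet Xs)
    {Y U : Type*} [Fintype Y] [Fintype U]
    (T : Xs → U → MeasureTheory.Measure Xs)
    (hT_meas : ∀ u : U, Measurable fun x : Xs => T x u)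
    (hT_prob : ∀ (x : Xs) (u : U), MeasureTheory.IsProbabilityMeasure (T x u))
    (Q : Xs → Y → ℝ)
    (hQ_meas : ∀ y : Y, Measurable fun x : Xs => Q x y)
    (hQ_nonneg : ∀ (x : Xs) (y : Y), 0 ≤ Q x y)
    (hQ_sum : ∀ x : Xs, ∑ y : Y, Q x y = 1)
    (αX : ℝ)
    (hT_lip : ∀ (x x' : Xs) (u : U), tvDist (T x u) (T x' u) ≤ αX * dist x x')
    (z z' : MeasureTheory.Measure Xs)
    (hz : MeasureTheory.IsProbabilityMeasure z)
    (hz' : MeasureTheory.IsProbabilityMeasure z')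
    (u : U) :
    obsTVDist T Q z z' u ≤
      (1 - dobrushinObs Q) * (1 + αX) * blDist (fun x x' : Xs => dist x x') z z' :=
  statement5_general Xs T hT_meas hT_prob Q hQ_meas hQ_nonneg hQ_sum αX hT_lip z z' hz hz' u
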